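/- arXiv:quant-ph/0311081 — 3 statements merged into one kernel-verified Lean document; each statement's English description precedes it below -/
import Mathlib

section
/- For unit vectors n, r ∈ ℝ³ and ε ∈ (0,1), P(n,ε) P(r,1) P(n,ε) = λ(ε,n,r) • P(r',1), where λ(ε,n,r) = (1+ε²+2ε(n·r))/4 and r' = ((1-ε²)r + 2ε(1+ε(n·r))n) / (1+ε²+2ε(n·r)). Here P(m,1) = (1/2)(I + m·σ) is the projection onto the spin state in direction m. -/
open Matrix

noncomputable def pauli1 : Matrix (Fin 2) (Fin 2) ℂ := !![0, 1; 1, 0]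
noncomputable def pauli2 : Matrix (Fin 2) (Fin 2) ℂ := !![0, -Complex.I; Complex.I, 0]
noncomputable def pauli3 : Matrix (Fin 2) (Fin 2) ℂ := !![1, 0; 0, -1]

noncomputable def dotPauli (m : Fin 3 → ℝ) : Matrix (Fin 2) (Fin 2) ℂ :=
  (m 0 : ℂ) • pauli1 + (m 1 : ℂ) • pauli2 + (m 2 : ℂ) • pauli3

/-- The fuzzy projection `P(m, δ) = (1/2)(I + δ m·σ)`. -/
noncomputable def fuzzyProj (m : Fin 3 → ℝ) (δ : ℝ) : Matrix (Fin 2) (Fin 2) ℂ :=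
  (1 / 2 : ℂ) • (1 + (δ : ℂ) • dotPauli m)

/-- Euclidean inner product on ℝ³. -/
def dot3 (a b : Fin 3 → ℝ) : ℝ := a 0 * b 0 + a 1 * b 1 + a 2 * b 2

/-! The Pauli vectors obey the Clifford relation `(a·σ)(b·σ) + (b·σ)(a·σ) = 2(a·b)`. Hence for a
unit vector `n`, with `N = n·σ` and `R = r·σ`, we have `N² = 1` and `NRN = 2(n·r)N - R`, and
expanding `(1 + εN)(1 + R)(1 + εN)` gives `(1 + ε² + 2ε(n·r)) + (1 - ε²)R + 2ε(1 + ε(n·r))N`.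
For `0 < ε < 1` and unit `r` the scalar part is positive, so it can be factored out, leaving a
projection `P(r', 1)`. -/

lemma dotPauli_mul_add_mul_swap (a b : Fin 3 → ℝ) :
    dotPauli a * dotPauli b + dotPauli b * dotPauli a = (2 * (dot3 a b : ℂ)) • 1 := by
  ext i j
  fin_cases i <;> fin_cases j <;>
    simp [dotPauli, pauli1, pauli2, pauli3, dot3] <;>
    ring_nf <;> simp only [Complex.I_sq] <;> ring

lemma dotPauli_mul_self (a : Fin 3 → ℝ) : dotPauli a * dotPauli a = (dot3 a a : ℂ) • 1 := by
  have h := dotPauli_mul_add_mul_swap a a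
  rw [← two_smul ℂ, mul_smul] at h
  exact smul_right_injective _ two_ne_zero h

lemma dotPauli_mul_mul_self (a b : Fin 3 → ℝ) :
    dotPauli a * dotPauli b * dotPauli a
      = (2 * (dot3 a b : ℂ)) • dotPauli a - (dot3 a a : ℂ) • dotPauli b := by
  calc dotPauli a * dotPauli b * dotPauli a
      = (dotPauli a * dotPauli b + dotPauli b * dotPauli a) * dotPauli a
          - dotPauli b * (dotPauli a * dotPauli a) := by noncomm_ring
    _ = _ := by
        rw [dotPauli_mul_add_mul_swap, dotPauli_mul_self, smul_mul_assoc, mul_smul_comm,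
          one_mul, mul_one]

lemma dotPauli_smul_add_smul (c e : ℝ) (a b : Fin 3 → ℝ) :
    dotPauli (fun i => c * a i + e * b i) = (c : ℂ) • dotPauli a + (e : ℂ) • dotPauli b := by
  simp only [dotPauli]
  push_cast
  module

lemma dotPauli_div_const (m : Fin 3 → ℝ) (c : ℝ) :
    dotPauli (fun i => m i / c) = (c : ℂ)⁻¹ • dotPauli m := by
  simp only [dotPauli]
  push_cast
  module

lemma one_add_smul_dotPauli_sandwich {n : Fin 3 → ℝ} (hn : dot3 n n = 1) (r : Fin 3 → ℝ)
    (ε : ℂ) :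
    (1 + ε • dotPauli n) * (1 + dotPauli r) * (1 + ε • dotPauli n)
      = (1 + ε ^ 2 + 2 * ε * dot3 n r) • 1 + (1 - ε ^ 2) • dotPauli r
        + (2 * ε * (1 + ε * dot3 n r)) • dotPauli n := by
  have hNN := dotPauli_mul_self n
  have hNRN := dotPauli_mul_mul_self n r
  have hanti := dotPauli_mul_add_mul_swap n r
  rw [hn, Complex.ofReal_one] at hNN hNRN
  calc (1 + ε • dotPauli n) * (1 + dotPauli r) * (1 + ε • dotPauli n)
      = 1 + (2 * ε) • dotPauli n + dotPauli r + ε ^ 2 • (dotPauli n * dotPauli n)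
          + ε • (dotPauli n * dotPauli r + dotPauli r * dotPauli n)
          + ε ^ 2 • (dotPauli n * dotPauli r * dotPauli n) := by
        simp only [add_mul, mul_add, smul_mul_assoc, mul_smul_comm, mul_one, one_mul]
        module
    _ = _ := by
        rw [hNN, hanti, hNRN]
        module

lemma fuzzyProj_mul_fuzzyProj_one_mul_fuzzyProj {n : Fin 3 → ℝ} (hn : dot3 n n = 1)
    (r : Fin 3 → ℝ) (ε : ℝ) :
    fuzzyProj n ε * fuzzyProj r 1 * fuzzyProj n ε
      = (1 / 8 : ℂ) • ((1 + ε ^ 2 + 2 * ε * dot3 n r : ℂ) • 1 + (1 - ε ^ 2 : ℂ) • dotPauli r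
          + (2 * ε * (1 + ε * dot3 n r) : ℂ) • dotPauli n) := by
  simp only [fuzzyProj, Complex.ofReal_one, one_smul, smul_mul_assoc, mul_smul_comm, smul_smul]
  rw [one_add_smul_dotPauli_sandwich hn]
  norm_num

lemma smul_fuzzyProj_div_one (m : Fin 3 → ℝ) {D : ℝ} (hD : D ≠ 0) :
    ((D / 4 : ℝ) : ℂ) • fuzzyProj (fun i => m i / D) 1
      = (1 / 8 : ℂ) • ((D : ℂ) • 1 + dotPauli m) := by
  rw [fuzzyProj, dotPauli_div_const, Complex.ofReal_one, one_smul]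
  match_scalars
  · ring
  · field_simp [Complex.ofReal_ne_zero.mpr hD]
    norm_num

lemma neg_one_le_dot3 {a b : Fin 3 → ℝ} (ha : dot3 a a = 1) (hb : dot3 b b = 1) :
    -1 ≤ dot3 a b := by
  unfold dot3 at *
  nlinarith [sq_nonneg (a 0 + b 0), sq_nonneg (a 1 + b 1), sq_nonneg (a 2 + b 2)]

theorem jump_formula (n r : Fin 3 → ℝ)
    (hn : dot3 n n = 1) (hr : dot3 r r = 1)
    (ε : ℝ) (hε : 0 < ε) (hε1 : ε < 1) :
    fuzzyProj n ε * fuzzyProj r 1 * fuzzyProj n ε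
      = (((1 + ε ^ 2 + 2 * ε * dot3 n r) / 4 : ℝ) : ℂ) •
          fuzzyProj (fun i =>
            ((1 - ε ^ 2) * r i + 2 * ε * (1 + ε * dot3 n r) * n i) /
              (1 + ε ^ 2 + 2 * ε * dot3 n r)) 1 := by
  have hD : 0 < 1 + ε ^ 2 + 2 * ε * dot3 n r := by
    have := neg_one_le_dot3 hn hr
    -- 1 + ε² + 2ε(n·r) = (1 - ε)² + 2ε(1 + n·r)
    nlinarith [pow_pos (sub_pos.mpr hε1) 2]
  rw [fuzzyProj_mul_fuzzyProj_one_mul_fuzzyProj hn,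
    smul_fuzzyProj_div_one (fun i => (1 - ε ^ 2) * r i + 2 * ε * (1 + ε * dot3 n r) * n i)
      hD.ne', dotPauli_smul_add_smul]
  push_cast
  module
end

section
/- If A and B are self-adjoint bounded operators on a complex Hilbert space and ψ is a unit vector, then the standard deviations Δψ A = (⟨A²⟩ψ - ⟨A⟩ψ²)^{1/2} and Δψ B satisfy the Robertson inequality Δψ A · Δψ B ≥ (1/2)|⟨[A,B]⟩ψ|, where ⟨X⟩ψ = ⟨ψ, X ψ⟩. -/
/-!
For symmetric `A`, `B` one has `⟪x, [A, B] x⟫ = ⟪A x, B x⟫ - conj ⟪A x, B x⟫`, whose norm is at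
most `2 ‖A x‖ ‖B x‖` by Cauchy–Schwarz. Replacing `A`, `B` by `A - a`, `B - b` with real `a`, `b`
keeps them symmetric and leaves the commutator unchanged, and for `a = re ⟪x, A x⟫`,
`b = re ⟪x, B x⟫` the norms `‖(A - a) x‖`, `‖(B - b) x‖` are the standard deviations.
-/

open scoped InnerProductSpace ComplexConjugate
open RCLike

theorem LinearMap.commutator_sub_smul_id {R M : Type*} [CommRing R] [AddCommGroup M] [Module R M]
    (A B : M →ₗ[R] M) (a b : R) (x : M) :
    (A - a • id : M →ₗ[R] M) ((B - b • id : M →ₗ[R] M) x) -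
        (B - b • id : M →ₗ[R] M) ((A - a • id : M →ₗ[R] M) x) = A (B x) - B (A x) := by
  simp only [sub_apply, smul_apply, id_apply, map_sub, map_smul]
  module

namespace LinearMap.IsSymmetric

variable {𝕜 E : Type*} [RCLike 𝕜] [NormedAddCommGroup E] [InnerProductSpace 𝕜 E]
  {A B : E →ₗ[𝕜] E}

theorem inner_commutator_eq (hA : A.IsSymmetric) (hB : B.IsSymmetric) (x : E) :
    ⟪x, A (B x) - B (A x)⟫_𝕜 = ⟪A x, B x⟫_𝕜 - conj ⟪A x, B x⟫_𝕜 := by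
  rw [inner_sub_right, ← hA, ← hB, inner_conj_symm]

theorem norm_inner_commutator_le (hA : A.IsSymmetric) (hB : B.IsSymmetric) (x : E) :
    ‖⟪x, A (B x) - B (A x)⟫_𝕜‖ ≤ 2 * (‖A x‖ * ‖B x‖) :=
  calc ‖⟪x, A (B x) - B (A x)⟫_𝕜‖
      = ‖⟪A x, B x⟫_𝕜 - conj ⟪A x, B x⟫_𝕜‖ := by rw [hA.inner_commutator_eq hB]
    _ ≤ 2 * ‖⟪A x, B x⟫_𝕜‖ := by grw [norm_sub_le, RCLike.norm_conj, two_mul]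
    _ ≤ 2 * (‖A x‖ * ‖B x‖) := by grw [norm_inner_le_norm]

theorem sub_ofReal_smul_id (hA : A.IsSymmetric) (c : ℝ) :
    (A - (c : 𝕜) • LinearMap.id).IsSymmetric :=
  hA.sub (LinearMap.IsSymmetric.id.smul (conj_ofReal c))

theorem norm_inner_commutator_le_mul_norm_sub_smul (hA : A.IsSymmetric) (hB : B.IsSymmetric)
    (a b : ℝ) (x : E) :
    (1 / 2) * ‖⟪x, A (B x) - B (A x)⟫_𝕜‖ ≤ ‖A x - (a : 𝕜) • x‖ * ‖B x - (b : 𝕜) • x‖ := by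
  have h := (hA.sub_ofReal_smul_id a).norm_inner_commutator_le (hB.sub_ofReal_smul_id b) x
  rw [commutator_sub_smul_id] at h
  simp only [sub_apply, smul_apply, id_apply] at h
  linarith

theorem norm_apply_sub_re_inner_smul_sq (hA : A.IsSymmetric) {x : E} (hx : ‖x‖ = 1) :
    ‖A x - ((re ⟪x, A x⟫_𝕜 : ℝ) : 𝕜) • x‖ ^ 2 = re ⟪x, A (A x)⟫_𝕜 - re ⟪x, A x⟫_𝕜 ^ 2 := by
  rw [norm_sub_sq (𝕜 := 𝕜), inner_smul_right, re_ofReal_mul, norm_smul, hx, mul_one, norm_ofReal,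
    sq_abs, ← inner_self_eq_norm_sq (𝕜 := 𝕜) (A x), hA, inner_re_symm (A x)]
  ring

theorem robertson (hA : A.IsSymmetric) (hB : B.IsSymmetric) {x : E} (hx : ‖x‖ = 1) :
    (1 / 2) * ‖⟪x, A (B x) - B (A x)⟫_𝕜‖ ≤
      √(re ⟪x, A (A x)⟫_𝕜 - re ⟪x, A x⟫_𝕜 ^ 2) * √(re ⟪x, B (B x)⟫_𝕜 - re ⟪x, B x⟫_𝕜 ^ 2) := by
  rw [← hA.norm_apply_sub_re_inner_smul_sq hx, ← hB.norm_apply_sub_re_inner_smul_sq hx,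
    Real.sqrt_sq (norm_nonneg _), Real.sqrt_sq (norm_nonneg _)]
  exact hA.norm_inner_commutator_le_mul_norm_sub_smul hB _ _ x

end LinearMap.IsSymmetric

/-- Robertson's uncertainty inequality for bounded self-adjoint operators. -/
theorem robertson_inequality {H : Type*} [NormedAddCommGroup H]
    [InnerProductSpace ℂ H] [CompleteSpace H]
    (A B : H →L[ℂ] H) (hA : IsSelfAdjoint A) (hB : IsSelfAdjoint B)
    (ψ : H) (hψ : ‖ψ‖ = 1) :
    Real.sqrt ((⟪ψ, A (A ψ)⟫_ℂ).re - (⟪ψ, A ψ⟫_ℂ).re ^ 2) *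
        Real.sqrt ((⟪ψ, B (B ψ)⟫_ℂ).re - (⟪ψ, B ψ⟫_ℂ).re ^ 2)
      ≥ (1 / 2) * ‖⟪ψ, A (B ψ) - B (A ψ)⟫_ℂ‖ :=
  hA.isSymmetric.robertson hB.isSymmetric hψ
end

section
/- With ψ as in the PDP non-unitary evolution (ψ̇ = (-iH - Λ/2)ψ, H self-adjoint, Λ ≥ 0, ‖ψ(t₀)‖ = 1), the jump probability p(t) = 1 - exp(-∫_{t₀}^t ⟨ψ(s),Λψ(s)⟩/‖ψ(s)‖² ds) equals 1 - ‖ψ(t)‖², provided ‖ψ(s)‖ > 0 for s ∈ [t₀,t]. -/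
/-!
Since `H` is symmetric, the term `-iH` does not change the norm, so along the non-unitary flow
`d/dt ‖ψ‖² = -re ⟪ψ, Λψ⟫`. Hence `λ = -(d/dt ‖ψ‖²) / ‖ψ‖² = -d/dt log ‖ψ‖²`, and the exponent
`-∫ λ` is `log ‖ψ t‖² - log ‖ψ t₀‖² = log ‖ψ t‖²`.
-/

open scoped InnerProductSpace
open Real Set

theorem exp_integral_div_eq_div_of_hasDerivAt {f f' : ℝ → ℝ} {a b : ℝ} (hab : a ≤ b)
    (hf : ∀ s ∈ Icc a b, HasDerivAt f (f' s) s) (hf' : ContinuousOn f' (Icc a b))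
    (hpos : ∀ s ∈ Icc a b, 0 < f s) :
    exp (∫ s in a..b, f' s / f s) = f b / f a := by
  have hlog : ∀ s ∈ uIcc a b, HasDerivAt (fun u => log (f u)) (f' s / f s) s := fun s hs =>
    (hf s (uIcc_of_le hab ▸ hs)).log (hpos s (uIcc_of_le hab ▸ hs)).ne'
  have hcont : ContinuousOn f (Icc a b) := fun s hs =>
    (hf s hs).continuousAt.continuousWithinAt
  have hint : IntervalIntegrable (fun s => f' s / f s) MeasureTheory.volume a b :=
    (hf'.div hcont fun s hs => (hpos s hs).ne').intervalIntegrable_of_Icc hab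
  rw [intervalIntegral.integral_eq_sub_of_hasDerivAt hlog hint, exp_sub,
    exp_log (hpos b ⟨hab, le_rfl⟩), exp_log (hpos a ⟨le_rfl, hab⟩)]

variable {E : Type*} [NormedAddCommGroup E] [InnerProductSpace ℂ E]

theorem re_inner_neg_I_smul_apply_self {H : E →ₗ[ℂ] E} (hH : H.IsSymmetric) (x : E) :
    (⟪x, (-Complex.I) • H x⟫_ℂ).re = 0 := by
  simpa [inner_smul_right] using hH.im_inner_self_apply x

theorem HasDerivAt.norm_sq_of_complex {ψ : ℝ → E} {v : E} {t : ℝ} (hψ : HasDerivAt ψ v t) :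
    HasDerivAt (‖ψ ·‖ ^ 2) (2 * (⟪ψ t, v⟫_ℂ).re) t :=
  letI := InnerProductSpace.rclikeToReal ℂ E
  hψ.norm_sq

theorem hasDerivAt_norm_sq_of_hasDerivAt_nonunitary {H : E →ₗ[ℂ] E} (hH : H.IsSymmetric)
    (Λ : E → E) {ψ : ℝ → E} {t : ℝ}
    (hψ : HasDerivAt ψ ((-Complex.I) • H (ψ t) - (1 / 2 : ℂ) • Λ (ψ t)) t) :
    HasDerivAt (‖ψ ·‖ ^ 2) (-(⟪ψ t, Λ (ψ t)⟫_ℂ).re) t := by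
  convert hψ.norm_sq_of_complex using 1
  rw [inner_sub_right, Complex.sub_re, re_inner_neg_I_smul_apply_self hH, inner_smul_right]
  simp only [Complex.mul_re]
  norm_num
  ring

theorem jump_probability_eq_general {d : ℕ}
    (H Λ : EuclideanSpace ℂ (Fin d) →L[ℂ] EuclideanSpace ℂ (Fin d))
    (hH : ∀ x y, ⟪H x, y⟫_ℂ = ⟪x, H y⟫_ℂ)
    (ψ : ℝ → EuclideanSpace ℂ (Fin d))
    (hψ : ∀ t, HasDerivAt ψ ((-Complex.I) • H (ψ t) - (1 / 2 : ℂ) • Λ (ψ t)) t)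
    (t₀ t : ℝ) (ht : t₀ ≤ t)
    (hinit : ‖ψ t₀‖ = 1)
    (hpos : ∀ s ∈ Set.Icc t₀ t, 0 < ‖ψ s‖) :
    1 - Real.exp (-(∫ s in t₀..t, (⟪ψ s, Λ (ψ s)⟫_ℂ).re / ‖ψ s‖ ^ 2))
      = 1 - ‖ψ t‖ ^ 2 := by
  have hHsymm : (H : EuclideanSpace ℂ (Fin d) →ₗ[ℂ] _).IsSymmetric := hH
  have hψcont : Continuous ψ := continuous_iff_continuousAt.2 fun s => (hψ s).continuousAt
  have hdecay : ContinuousOn (fun s => -(⟪ψ s, Λ (ψ s)⟫_ℂ).re) (Icc t₀ t) :=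
    (Complex.continuous_re.comp (hψcont.inner (Λ.continuous.comp hψcont))).neg.continuousOn
  have hexp := exp_integral_div_eq_div_of_hasDerivAt ht
    (fun s _ => hasDerivAt_norm_sq_of_hasDerivAt_nonunitary hHsymm Λ (hψ s)) hdecay
    (fun s hs => pow_pos (hpos s hs) 2)
  simp only [neg_div, intervalIntegral.integral_neg, hinit, one_pow, div_one] at hexp
  rw [hexp]

/-- The jump probability `p(t) = 1 - exp(-∫ λ(s) ds)` of the PDP, with intensity
`λ(s) = ⟨ψ(s),Λψ(s)⟩/‖ψ(s)‖²`, equals `1 - ‖ψ(t)‖²`, given `‖ψ(t₀)‖ = 1`. -/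
theorem jump_probability_eq {d : ℕ}
    (H Λ : EuclideanSpace ℂ (Fin d) →L[ℂ] EuclideanSpace ℂ (Fin d))
    (hH : ∀ x y, ⟪H x, y⟫_ℂ = ⟪x, H y⟫_ℂ)
    (hΛpos : ∀ x, 0 ≤ (⟪x, Λ x⟫_ℂ).re)
    (hΛreal : ∀ x, (⟪x, Λ x⟫_ℂ).im = 0)
    (ψ : ℝ → EuclideanSpace ℂ (Fin d))
    (hψ : ∀ t, HasDerivAt ψ ((-Complex.I) • H (ψ t) - (1 / 2 : ℂ) • Λ (ψ t)) t)
    (t₀ t : ℝ) (ht : t₀ ≤ t)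
    (hinit : ‖ψ t₀‖ = 1)
    (hpos : ∀ s ∈ Set.Icc t₀ t, 0 < ‖ψ s‖) :
    1 - Real.exp (-(∫ s in t₀..t, (⟪ψ s, Λ (ψ s)⟫_ℂ).re / ‖ψ s‖ ^ 2))
      = 1 - ‖ψ t‖ ^ 2 :=
  jump_probability_eq_general H Λ hH ψ hψ t₀ t ht hinit hpos
end
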